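/- In the NFA for the status field of a root-level QNode, every directed cycle contains at least one 'begin new acquisition' edge (livelock freedom). -/

import Mathlib

inductive S : Type
  | R1 | R2 | W1 | W2 | W3 | W4 | U1 | U2 | U3 | A1
deriving DecidableEq

/-- Edges of the root-level status NFA; the Boolean flag marks 'begin acquisition' edges. -/
inductive E : S → S → Bool → Prop
  | a1 : E .R1 .W1 true
  | a2 : E .R1 .W2 true
  | a3 : E .A1 .W1 true
  | a4 : E .U2 .W3 true
  | a5 : E .U3 .W4 true
  | e1 : E .W2 .U1 false
  | e2 : E .U1 .R1 false
  | e3 : E .U1 .U3 false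
  | e4 : E .U3 .R1 false
  | e5 : E .W4 .U3 false
  | e6 : E .W4 .R2 false
  | e7 : E .W1 .U1 false
  | e8 : E .W1 .A1 false
  | e9 : E .A1 .U2 false
  | e10 : E .U2 .R1 false
  | e11 : E .U2 .U3 false
  | e12 : E .W3 .U2 false
  | e13 : E .W3 .R2 false
  | e14 : E .R2 .U1 false
  | e15 : E .R2 .A1 false

theorem Relation.TransGen.irrefl_of_map_lt {α β : Type*} [Preorder β] {r : α → α → Prop}
    (f : α → β) (hf : ∀ ⦃a b⦄, r a b → f b < f a) (a : α) : ¬ Relation.TransGen r a a := by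
  intro h
  have hlt : Relation.TransGen (· > ·) (f a) (f a) := h.lift f hf
  rw [Relation.transGen_eq_self] at hlt
  exact lt_irrefl _ hlt

def rank : S → ℕ
  | .R1 => 0 | .U3 => 1 | .U1 => 2 | .U2 => 3 | .A1 => 4
  | .R2 => 5 | .W2 => 3 | .W1 => 5 | .W4 => 6 | .W3 => 6

theorem rank_lt_of_nonacquisition {a b : S} (h : E a b false) : rank b < rank a := by
  cases h <;> decide

/-- Livelock freedom: every directed cycle of the root-level status NFA
contains at least one 'begin acquisition' edge; equivalently, there is no
nonempty cycle consisting only of non-acquisition edges. -/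
theorem root_status_livelock_free :
    ∀ s : S, ¬ Relation.TransGen (fun a b => E a b false) s s :=
  Relation.TransGen.irrefl_of_map_lt rank fun _ _ => rank_lt_of_nonacquisition
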